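/- arXiv:1207.3168 — 4 statements merged into one kernel-verified Lean document; each statement's English description precedes it below -/
import Mathlib

section
/- Let δ > 0 and let L ≥ 3 be an integer with 64δL² < 1. Then for every z ∈ ℤ₊ and every k ≥ 1, the probability that there exists a cluster C of level at least 1 with α(C) = z and m(C) = k is at most 32(2δL)^k / ((1 − 4δL²)(1 − 64δL²)); in particular this bound has the form c₁ e^{−c₂ k} with c₂ = −log(2δ) − log L > log L. -/
/-!
Every cluster of mass `k` starting at `z` contains a *skeleton*: points `z = x₀ < x₁ < ⋯ < x_n`
of `Γ` where each gap `x_{i+1} - x_i` was bridged by a run at some level `j_i ≥ 1`, hence is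
`< L ^ j_i`, and `k + ∑ (j_i - 1) = n + 1` because of the way masses add up in a run.
A given skeleton is present with probability
`δ ^ (n + 1) = δ (2δL) ^ (k - 1) ∏ (2δL) ^ (j_i - 1) / (2L)`. Summing the weight
`(2δL) ^ (j - 1) / (2L)` over the fewer than `L ^ j` gaps of each level `j` gives at most
`(1 - 2δL²)⁻¹ / 2 < 1`, so the sum over all skeletons is a convergent geometric series.
-/

open scoped Classical

noncomputable section

/-- `α(C)`: the smallest element of a cluster. -/
def clAlpha (c : Finset ℕ) : ℕ := sInf (↑c : Set ℕ)

/-- `ω(C)`: the largest element of a cluster. -/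
def clOmega (c : Finset ℕ) : ℕ := sSup (↑c : Set ℕ)

/-- Euclidean distance between two finite subsets of `ℤ₊`. -/
def clDist (a b : Finset ℕ) : ℕ :=
  sInf {d : ℕ | ∃ x ∈ a, ∃ y ∈ b, d = max x y - min x y}

/-- A maximal `(k+1)`-run among a family `F` of clusters: at least two consecutive members
of `F`, successive ones at Euclidean distance `< L^(k+1)`, maximal in the sense that the
member of `F` immediately preceding (resp. following) the run, if any, is at distance
`≥ L^(k+1)`. -/
structure MaxRun (L k : ℕ) (F : Set (Finset ℕ)) where
  n : ℕ
  c : ℕ → Finset ℕ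
  two_le : 2 ≤ n
  mem : ∀ i, i < n → c i ∈ F
  ordered : ∀ i, i + 1 < n → clOmega (c i) < clAlpha (c (i + 1))
  consecutive : ∀ i, i + 1 < n → ∀ b ∈ F,
    ¬(clOmega (c i) < clAlpha b ∧ clOmega b < clAlpha (c (i + 1)))
  close : ∀ i, i + 1 < n → clDist (c i) (c (i + 1)) < L ^ (k + 1)
  max_below : ∀ b ∈ F, clOmega b < clAlpha (c 0) →
    (∀ b' ∈ F, ¬(clOmega b < clAlpha b' ∧ clOmega b' < clAlpha (c 0))) →
    L ^ (k + 1) ≤ clDist b (c 0)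
  max_above : ∀ b ∈ F, clOmega (c (n - 1)) < clAlpha b →
    (∀ b' ∈ F, ¬(clOmega (c (n - 1)) < clAlpha b' ∧ clOmega b' < clAlpha b)) →
    L ^ (k + 1) ≤ clDist (c (n - 1)) b

/-- The span of a run: the smallest integer interval containing all of its constituents. -/
def MaxRun.spanIcc {L k : ℕ} {F : Set (Finset ℕ)} (R : MaxRun L k F) : Finset ℕ :=
  Finset.Icc (clAlpha (R.c 0)) (clOmega (R.c (R.n - 1)))

/-- The cluster of level `k+1` produced by a maximal `(k+1)`-run: `span(run) ∩ Γ`. -/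
def MaxRun.cluster {L k : ℕ} {F : Set (Finset ℕ)} (Γ : Set ℕ) (R : MaxRun L k F) : Finset ℕ :=
  R.spanIcc.filter (fun x => x ∈ Γ)

/-- The mass of the cluster produced by a run with constituent masses `m₁, …, m_n`:
`m₁ + ∑_{s=2}^n (m_s − k)`. -/
def MaxRun.newMass {L k : ℕ} {F : Set (Finset ℕ)} (mass : Finset ℕ → ℕ) (R : MaxRun L k F) : ℕ :=
  mass (R.c 0) + ∑ i ∈ Finset.Ico 1 R.n, (mass (R.c i) - k)

/-- The recursive cluster hierarchy over the environment `Γ ⊆ ℤ₊` with parameter `L`: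
`C 0` is the partition of `Γ` into singletons of mass one; `C (k+1)` consists of the
clusters produced by the maximal `(k+1)`-runs of clusters of `C k` of mass at least `k+1`,
together with the clusters of `C k` disjoint from the spans of all such runs. -/
structure ClusterHierarchy (L : ℕ) (Γ : Set ℕ) where
  C : ℕ → Set (Finset ℕ)
  mass : Finset ℕ → ℕ
  C_zero : C 0 = {s | ∃ x ∈ Γ, s = {x}}
  mass_zero : ∀ x ∈ Γ, mass ({x} : Finset ℕ) = 1
  mem_succ : ∀ k c, c ∈ C (k + 1) ↔
    ((∃ R : MaxRun L k {b | b ∈ C k ∧ k + 1 ≤ mass b}, c = R.cluster Γ) ∨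
     (c ∈ C k ∧ ∀ R : MaxRun L k {b | b ∈ C k ∧ k + 1 ≤ mass b},
        ∀ x ∈ c, x ∉ R.spanIcc))
  mass_succ : ∀ k (R : MaxRun L k {b | b ∈ C k ∧ k + 1 ≤ mass b}),
    mass (R.cluster Γ) = R.newMass mass

namespace ClusterHierarchy

variable {L : ℕ} {Γ : Set ℕ}

/-- `c` is a cluster of the hierarchy. -/
def IsCluster (H : ClusterHierarchy L Γ) (c : Finset ℕ) : Prop := ∃ k, c ∈ H.C k

/-- The level `ℓ(C)` of a cluster: the smallest `k` with `C ∈ C_k`. -/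
def level (H : ClusterHierarchy L Γ) (c : Finset ℕ) : ℕ := sInf {k | c ∈ H.C k}

/-- The set of levels of clusters containing `x`; `κ(x)` is its supremum. -/
def kappaSet (H : ClusterHierarchy L Γ) (x : ℕ) : Set ℕ :=
  {ℓ | ∃ c, H.IsCluster c ∧ H.level c = ℓ ∧ x ∈ c}

/-- The limiting partition `C_∞`: the maximal clusters, i.e. clusters which are not met
by any cluster of strictly larger level. -/
def Cinf (H : ClusterHierarchy L Γ) : Set (Finset ℕ) :=
  {c | H.IsCluster c ∧
    ∀ c', H.IsCluster c' → (∃ x, x ∈ c ∧ x ∈ c') → H.level c' ≤ H.level c}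

end ClusterHierarchy

end

open MeasureTheory ProbabilityTheory

open scoped ENNReal

def IsGapStep (L : ℕ) (p : ℕ × ℕ) : Prop := 1 ≤ p.1 ∧ 1 ≤ p.2 ∧ p.2 < L ^ p.1

def skeletonPoints (a : ℕ) : List (ℕ × ℕ) → List ℕ
  | [] => [a]
  | p :: l => a :: skeletonPoints (a + p.2) l

/-- A step `(j, g)` of `l` is a gap `g` bridged at level `j`. The mass identity
`m + ∑ (j - 1) = #steps + 1` is the invariant preserved by the run rule `m₁ + ∑ (m_s - k)`. -/
def IsSkeleton (L : ℕ) (Γ : Set ℕ) (a b m : ℕ) (l : List (ℕ × ℕ)) : Prop :=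
  (∀ p ∈ l, IsGapStep L p) ∧ m + (l.map fun p => p.1 - 1).sum = l.length + 1 ∧
    (∀ x ∈ skeletonPoints a l, x ∈ Γ) ∧ a + (l.map Prod.snd).sum = b

theorem self_mem_skeletonPoints (a : ℕ) (l : List (ℕ × ℕ)) : a ∈ skeletonPoints a l := by
  cases l <;> simp [skeletonPoints]

theorem add_sum_mem_skeletonPoints :
    ∀ (a : ℕ) (l : List (ℕ × ℕ)), a + (l.map Prod.snd).sum ∈ skeletonPoints a l
  | a, [] => by simp [skeletonPoints]
  | a, p :: l => by
    simpa [skeletonPoints, add_assoc] using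
      Or.inr (add_sum_mem_skeletonPoints (a + p.2) l)

theorem le_of_mem_skeletonPoints {x : ℕ} :
    ∀ {a : ℕ} {l : List (ℕ × ℕ)}, x ∈ skeletonPoints a l → a ≤ x
  | a, [], h => by simp_all [skeletonPoints]
  | a, p :: l, h => by
    rcases List.mem_cons.1 h with rfl | h
    · exact le_rfl
    · exact (Nat.le_add_right a p.2).trans (le_of_mem_skeletonPoints h)

theorem length_skeletonPoints :
    ∀ (a : ℕ) (l : List (ℕ × ℕ)), (skeletonPoints a l).length = l.length + 1
  | a, [] => rfl
  | a, p :: l => by simp [skeletonPoints, length_skeletonPoints (a + p.2) l]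

theorem nodup_skeletonPoints :
    ∀ (a : ℕ) {l : List (ℕ × ℕ)}, (∀ p ∈ l, 1 ≤ p.2) → (skeletonPoints a l).Nodup
  | a, [], _ => by simp [skeletonPoints]
  | a, p :: l, h => by
    refine List.nodup_cons.2 ⟨fun ha => ?_, nodup_skeletonPoints _ fun q hq => h q (by simp [hq])⟩
    have := le_of_mem_skeletonPoints ha
    have := h p (by simp)
    omega

theorem mem_skeletonPoints_append {x : ℕ} :
    ∀ (a : ℕ) (l l' : List (ℕ × ℕ)), x ∈ skeletonPoints a (l ++ l') ↔
      x ∈ skeletonPoints a l ∨ x ∈ skeletonPoints (a + (l.map Prod.snd).sum) l'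
  | a, [], l' => by
    simp only [List.nil_append, skeletonPoints, List.map_nil, List.sum_nil, add_zero,
      List.mem_singleton]
    constructor
    · exact Or.inr
    · rintro (rfl | h)
      exacts [self_mem_skeletonPoints _ _, h]
  | a, p :: l, l' => by
    simp only [List.cons_append, skeletonPoints, List.mem_cons, List.map_cons, List.sum_cons,
      mem_skeletonPoints_append (a + p.2) l l', add_assoc]
    tauto

namespace IsSkeleton

variable {L : ℕ} {Γ : Set ℕ} {a b m : ℕ} {l : List (ℕ × ℕ)}

theorem nil (ha : a ∈ Γ) : IsSkeleton L Γ a a 1 [] :=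
  ⟨by simp, rfl, by simpa [skeletonPoints] using ha, rfl⟩

theorem left_mem (h : IsSkeleton L Γ a b m l) : a ∈ Γ :=
  h.2.2.1 a (self_mem_skeletonPoints a l)

theorem right_mem (h : IsSkeleton L Γ a b m l) : b ∈ Γ :=
  h.2.2.2 ▸ h.2.2.1 _ (add_sum_mem_skeletonPoints a l)

theorem le (h : IsSkeleton L Γ a b m l) : a ≤ b :=
  h.2.2.2 ▸ Nat.le_add_right _ _

theorem append {a' b' m' j : ℕ} {l' : List (ℕ × ℕ)} (h : IsSkeleton L Γ a b m l)
    (h' : IsSkeleton L Γ a' b' m' l') (hlt : b < a') (hgap : a' - b < L ^ (j + 1))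
    (hj : j ≤ m') :
    IsSkeleton L Γ a b' (m + (m' - j)) (l ++ (j + 1, a' - b) :: l') := by
  have hb := h.right_mem
  obtain ⟨hsteps, hmass, hpts, hend⟩ := h
  obtain ⟨hsteps', hmass', hpts', hend'⟩ := h'
  refine ⟨?_, ?_, ?_, ?_⟩
  · simp only [List.mem_append, List.mem_cons]
    rintro p (hp | rfl | hp)
    exacts [hsteps p hp, ⟨by omega, by omega, hgap⟩, hsteps' p hp]
  · simp only [List.map_append, List.map_cons, List.sum_append, List.sum_cons,
      List.length_append, List.length_cons]
    omega
  · intro x hx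
    rw [mem_skeletonPoints_append, hend] at hx
    rcases hx with hx | hx
    · exact hpts x hx
    · rw [skeletonPoints, Nat.add_sub_cancel' hlt.le, List.mem_cons] at hx
      rcases hx with rfl | hx
      exacts [hb, hpts' x hx]
  · simp only [List.map_append, List.map_cons, List.sum_append, List.sum_cons]
    omega

end IsSkeleton

theorem clAlpha_le {c : Finset ℕ} {x : ℕ} (hx : x ∈ c) : clAlpha c ≤ x :=
  Nat.sInf_le (by simpa using hx)

theorem le_clOmega {c : Finset ℕ} {x : ℕ} (hx : x ∈ c) : x ≤ clOmega c :=
  le_csSup c.finite_toSet.bddAbove (by simpa using hx)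

theorem clAlpha_mem {c : Finset ℕ} (h : c.Nonempty) : clAlpha c ∈ c := by
  simpa [clAlpha] using Nat.sInf_mem (s := (c : Set ℕ)) (by simpa using h)

theorem clOmega_mem {c : Finset ℕ} (h : c.Nonempty) : clOmega c ∈ c := by
  simpa [clOmega] using (c.coe_nonempty.2 h).csSup_mem c.finite_toSet

theorem sub_le_clDist {a b : Finset ℕ} (ha : a.Nonempty) (hb : b.Nonempty)
    (h : clOmega a < clAlpha b) : clAlpha b - clOmega a ≤ clDist a b := by
  refine le_csInf ⟨_, _, clOmega_mem ha, _, clAlpha_mem hb, rfl⟩ ?_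
  rintro d ⟨x, hx, y, hy, rfl⟩
  have := le_clOmega hx
  have := clAlpha_le hy
  omega

theorem IsSkeleton.filter_Icc {L : ℕ} {Γ : Set ℕ} {a b m : ℕ} {l : List (ℕ × ℕ)}
    (h : IsSkeleton L Γ a b m l) :
    ((Finset.Icc a b).filter (· ∈ Γ)).Nonempty ∧
      IsSkeleton L Γ (clAlpha ((Finset.Icc a b).filter (· ∈ Γ)))
        (clOmega ((Finset.Icc a b).filter (· ∈ Γ))) m l := by
  have ha : a ∈ (Finset.Icc a b).filter (· ∈ Γ) := by simp [h.le, h.left_mem]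
  have hb : b ∈ (Finset.Icc a b).filter (· ∈ Γ) := by simp [h.le, h.right_mem]
  have hα : clAlpha ((Finset.Icc a b).filter (· ∈ Γ)) = a :=
    le_antisymm (clAlpha_le ha) (le_csInf ⟨a, ha⟩ fun x hx => by simp_all)
  have hω : clOmega ((Finset.Icc a b).filter (· ∈ Γ)) = b :=
    le_antisymm (csSup_le ⟨b, hb⟩ fun x hx => by simp_all) (le_clOmega hb)
  exact ⟨⟨a, ha⟩, by rwa [hα, hω]⟩

namespace MaxRun

variable {L m : ℕ} {F : Set (Finset ℕ)} {Γ : Set ℕ} {mass : Finset ℕ → ℕ}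

theorem exists_isSkeleton_prefix (R : MaxRun L m F)
    (hF : ∀ b ∈ F, b.Nonempty ∧ m ≤ mass b ∧
      ∃ l, IsSkeleton L Γ (clAlpha b) (clOmega b) (mass b) l) :
    ∀ t < R.n, ∃ l, IsSkeleton L Γ (clAlpha (R.c 0)) (clOmega (R.c t))
      (mass (R.c 0) + ∑ i ∈ Finset.Ico 1 (t + 1), (mass (R.c i) - m)) l
  | 0, h0 => by
    obtain ⟨-, -, l, hl⟩ := hF _ (R.mem 0 h0)
    exact ⟨l, by simpa using hl⟩
  | t + 1, ht => by
    obtain ⟨l, hl⟩ := exists_isSkeleton_prefix R hF t (by omega)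
    obtain ⟨hne, -, -⟩ := hF _ (R.mem t (by omega))
    obtain ⟨hne', hm', l', hl'⟩ := hF _ (R.mem (t + 1) ht)
    have hgap := (sub_le_clDist hne hne' (R.ordered t ht)).trans_lt (R.close t ht)
    rw [Finset.sum_Ico_succ_top (by omega), ← add_assoc]
    exact ⟨_, hl.append hl' (R.ordered t ht) hgap hm'⟩

theorem exists_isSkeleton (R : MaxRun L m F)
    (hF : ∀ b ∈ F, b.Nonempty ∧ m ≤ mass b ∧
      ∃ l, IsSkeleton L Γ (clAlpha b) (clOmega b) (mass b) l) :
    ∃ l, IsSkeleton L Γ (clAlpha (R.c 0)) (clOmega (R.c (R.n - 1))) (R.newMass mass) l := by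
  have h := R.exists_isSkeleton_prefix hF (R.n - 1) (by have := R.two_le; omega)
  rwa [Nat.sub_add_cancel (by have := R.two_le; omega)] at h

end MaxRun

theorem ClusterHierarchy.exists_isSkeleton {L : ℕ} {Γ : Set ℕ} (H : ClusterHierarchy L Γ) :
    ∀ m, ∀ c ∈ H.C m, c.Nonempty ∧ ∃ l, IsSkeleton L Γ (clAlpha c) (clOmega c) (H.mass c) l
  | 0, c, hc => by
    rw [H.C_zero] at hc
    obtain ⟨x, hx, rfl⟩ := hc
    refine ⟨Finset.singleton_nonempty x, [], ?_⟩
    simpa [clAlpha, clOmega, H.mass_zero x hx] using IsSkeleton.nil hx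
  | m + 1, c, hc => by
    rcases (H.mem_succ m c).1 hc with ⟨R, rfl⟩ | ⟨hc, -⟩
    · obtain ⟨l, hl⟩ := R.exists_isSkeleton fun b hb =>
        have := H.exists_isSkeleton m b hb.1
        ⟨this.1, Nat.le_of_succ_le hb.2, this.2⟩
      rw [H.mass_succ]
      exact ⟨hl.filter_Icc.1, l, hl.filter_Icc.2⟩
    · exact H.exists_isSkeleton m c hc

theorem measure_forall_eq_true {ι Ω : Type*} [MeasurableSpace Ω] {μ : Measure Ω}
    {ξ : ι → Ω → Bool} {p : ℝ≥0∞} (hindep : iIndepFun ξ μ)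
    (hlaw : ∀ i, μ {ω | ξ i ω = true} = p) (S : Finset ι) :
    μ {ω | ∀ i ∈ S, ξ i ω = true} = p ^ S.card := by
  have hS : {ω | ∀ i ∈ S, ξ i ω = true} = ⋂ i ∈ S, ξ i ⁻¹' {true} := by ext; simp
  rw [hS, hindep.meas_biInter fun i _ => ⟨{true}, measurableSet_singleton true, rfl⟩]
  exact (Finset.prod_congr rfl fun i _ => hlaw i).trans (Finset.prod_const p)

theorem ENNReal.tsum_pi_fin_prod {β : Type*} (v : β → ℝ≥0∞) :
    ∀ n : ℕ, ∑' f : Fin n → β, ∏ i, v (f i) = (∑' b, v b) ^ n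
  | 0 => by simp
  | n + 1 => by
    rw [← (Fin.consEquiv fun _ => β).tsum_eq, ENNReal.tsum_prod', pow_succ', ← tsum_pi_fin_prod v n,
      ← ENNReal.tsum_mul_right]
    refine tsum_congr fun b => ?_
    rw [← ENNReal.tsum_mul_left]
    exact tsum_congr fun f => Fin.prod_univ_succ _

theorem ENNReal.tsum_list_prod_map {β : Type*} (v : β → ℝ≥0∞) :
    ∑' l : List β, (l.map v).prod = (1 - ∑' b, v b)⁻¹ := by
  rw [← ENNReal.tsum_geometric, ← List.equivSigmaTuple.symm.tsum_eq, ENNReal.tsum_sigma']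
  refine tsum_congr fun n => ?_
  rw [← ENNReal.tsum_pi_fin_prod v n]
  refine tsum_congr fun f => ?_
  simp [List.equivSigmaTuple, List.map_ofFn, List.prod_ofFn]

theorem ENNReal.inv_one_sub_le_ofReal {x : ℝ≥0∞} {q : ℝ} (hq0 : 0 ≤ q) (hq1 : q < 1)
    (hx : x ≤ ENNReal.ofReal q) : (1 - x)⁻¹ ≤ ENNReal.ofReal (1 - q)⁻¹ := by
  rw [ENNReal.ofReal_inv_of_pos (by linarith), ENNReal.ofReal_sub _ hq0, ENNReal.ofReal_one]
  gcongr

noncomputable def gapWeight (L : ℕ) (c r : ℝ≥0∞) (p : ℕ × ℕ) : ℝ≥0∞ :=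
  if IsGapStep L p then c * r ^ (p.1 - 1) else 0

section gapWeight

variable {L : ℕ} {c r : ℝ≥0∞}

theorem prod_gapWeight :
    ∀ {l : List (ℕ × ℕ)}, (∀ p ∈ l, IsGapStep L p) →
      (l.map (gapWeight L c r)).prod = c ^ l.length * r ^ (l.map fun p => p.1 - 1).sum
  | [], _ => by simp
  | p :: l, h => by
    simp only [List.map_cons, List.prod_cons, List.length_cons, List.sum_cons,
      prod_gapWeight fun q hq => h q (List.mem_cons_of_mem p hq), gapWeight,
      if_pos (h p List.mem_cons_self)]
    ring

theorem tsum_gapWeight_le : ∑' p, gapWeight L c r p ≤ L * c * (1 - L * r)⁻¹ := by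
  have hlevel0 : ∑' g, gapWeight L c r (0, g) = 0 := by simp [gapWeight, IsGapStep]
  have hlevel (j : ℕ) : ∑' g, gapWeight L c r (j + 1, g) ≤ L * c * (L * r) ^ j := by
    rw [tsum_eq_sum (s := Finset.range (L ^ (j + 1))) fun g hg => by
      simp_all [gapWeight, IsGapStep]]
    calc ∑ g ∈ Finset.range (L ^ (j + 1)), gapWeight L c r (j + 1, g)
        ≤ (Finset.range (L ^ (j + 1))).card • (c * r ^ j) :=
          Finset.sum_le_card_nsmul _ _ _ fun g _ => by unfold gapWeight; split_ifs <;> simp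
      _ = L * c * (L * r) ^ j := by rw [Finset.card_range, nsmul_eq_mul]; push_cast; ring
  calc ∑' p, gapWeight L c r p
      = ∑' j, ∑' g, gapWeight L c r (j + 1, g) := by
        rw [ENNReal.tsum_prod', tsum_eq_zero_add' ENNReal.summable, hlevel0, zero_add]
    _ ≤ ∑' j, L * c * (L * r) ^ j := ENNReal.tsum_le_tsum hlevel
    _ = L * c * (1 - L * r)⁻¹ := by rw [ENNReal.tsum_mul_left, ENNReal.tsum_geometric]

theorem measure_isSkeleton_le {Ω : Type*} [MeasurableSpace Ω] {μ : Measure Ω}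
    {ξ : ℕ → Ω → Bool} (hindep : iIndepFun ξ μ) (hlaw : ∀ i, μ {ω | ξ i ω = true} = c * r)
    {m : ℕ} (hm : 1 ≤ m) (a : ℕ) (l : List (ℕ × ℕ)) :
    μ {ω | ∃ b, IsSkeleton L {x | ξ x ω = true} a b m l} ≤
      c * r * r ^ (m - 1) * (l.map (gapWeight L c r)).prod := by
  by_cases hl : (∀ p ∈ l, IsGapStep L p) ∧ m + (l.map fun p => p.1 - 1).sum = l.length + 1
  · have hlen : l.length = m - 1 + (l.map fun p => p.1 - 1).sum := by omega
    calc μ {ω | ∃ b, IsSkeleton L {x | ξ x ω = true} a b m l}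
        ≤ μ {ω | ∀ x ∈ (skeletonPoints a l).toFinset, ξ x ω = true} :=
          measure_mono fun ω ⟨_, hb⟩ x hx => hb.2.2.1 x (List.mem_toFinset.1 hx)
      _ = (c * r) ^ (l.length + 1) := by
          rw [measure_forall_eq_true hindep hlaw, List.toFinset_card_of_nodup
            (nodup_skeletonPoints a fun p hp => (hl.1 p hp).2.1), length_skeletonPoints]
      _ = c * r * r ^ (m - 1) * (l.map (gapWeight L c r)).prod := by
          rw [prod_gapWeight hl.1, pow_succ', mul_pow, hlen, pow_add]
          ring
  · have hempty : {ω | ∃ b, IsSkeleton L {x | ξ x ω = true} a b m l} = ∅ :=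
      Set.eq_empty_of_forall_notMem fun ω ⟨_, hb⟩ => hl ⟨hb.1, hb.2.1⟩
    simp [hempty]

end gapWeight

section ofReal

variable {δ : ℝ} {L : ℕ}

theorem tsum_gapWeight_ofReal_le (hδ : 0 ≤ δ) (hL : 0 < L) (hQ : 2 * δ * L ^ 2 < 1) :
    ∑' p, gapWeight L (ENNReal.ofReal (2 * L)⁻¹) (ENNReal.ofReal (2 * δ * L)) p ≤
      ENNReal.ofReal (1 / 2 * (1 - 2 * δ * L ^ 2)⁻¹) := by
  have hLc : (L : ℝ≥0∞) * ENNReal.ofReal (2 * L)⁻¹ = ENNReal.ofReal (1 / 2) := by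
    rw [← ENNReal.ofReal_natCast, ← ENNReal.ofReal_mul (by positivity)]
    congr 1
    field_simp
  have hLr : (L : ℝ≥0∞) * ENNReal.ofReal (2 * δ * L) = ENNReal.ofReal (2 * δ * L ^ 2) := by
    rw [← ENNReal.ofReal_natCast, ← ENNReal.ofReal_mul (by positivity)]
    ring_nf
  calc _ ≤ _ := tsum_gapWeight_le
    _ ≤ ENNReal.ofReal (1 / 2) * ENNReal.ofReal (1 - 2 * δ * L ^ 2)⁻¹ := by
      rw [hLc, hLr]
      gcongr
      exact ENNReal.inv_one_sub_le_ofReal (by positivity) hQ le_rfl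
    _ = _ := (ENNReal.ofReal_mul (by norm_num)).symm

theorem inv_one_sub_tsum_gapWeight_le (hδ : 0 ≤ δ) (hL : 0 < L) (hQ : 2 * δ * L ^ 2 < 1 / 2) :
    (1 - ∑' p, gapWeight L (ENNReal.ofReal (2 * L)⁻¹) (ENNReal.ofReal (2 * δ * L)) p)⁻¹ ≤
      ENNReal.ofReal (1 - 1 / 2 * (1 - 2 * δ * L ^ 2)⁻¹)⁻¹ := by
  have hpos : 0 < (1 - 2 * δ * L ^ 2)⁻¹ := inv_pos.2 (by linarith)
  have hlt : (1 - 2 * δ * L ^ 2)⁻¹ < 2 := by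
    rw [inv_lt_comm₀ (by linarith) (by norm_num)]
    linarith
  exact ENNReal.inv_one_sub_le_ofReal (by positivity) (by linarith)
    (tsum_gapWeight_ofReal_le hδ hL (by linarith))

end ofReal

theorem skeleton_series_le {δ L : ℝ} {k : ℕ} (hδ : 0 < δ) (hL : 1 ≤ L)
    (hLδ : 64 * δ * L ^ 2 < 1) (hk : 1 ≤ k) :
    δ * (2 * δ * L) ^ (k - 1) * (1 - 1 / 2 * (1 - 2 * δ * L ^ 2)⁻¹)⁻¹ ≤
      32 * (2 * δ * L) ^ k / ((1 - 4 * δ * L ^ 2) * (1 - 64 * δ * L ^ 2)) := by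
  obtain ⟨k, rfl⟩ := Nat.exists_eq_add_of_le' hk
  have hδL : 0 ≤ δ * L ^ 2 := by positivity
  have h0 : 0 < 1 - 2 * δ * L ^ 2 := by linarith
  have h1 : 0 < 1 - 4 * δ * L ^ 2 := by linarith
  have h2 : 0 < 1 - 64 * δ * L ^ 2 := by linarith
  have hsplit : 1 - 1 / 2 * (1 - 2 * δ * L ^ 2)⁻¹ =
      (1 - 4 * δ * L ^ 2) / (2 * (1 - 2 * δ * L ^ 2)) := by
    field_simp
    ring
  have hA : 0 ≤ δ * (2 * δ * L) ^ k := by positivity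
  rw [hsplit, inv_div, Nat.add_sub_cancel]
  calc δ * (2 * δ * L) ^ k * (2 * (1 - 2 * δ * L ^ 2) / (1 - 4 * δ * L ^ 2))
      ≤ δ * (2 * δ * L) ^ k * (2 / (1 - 4 * δ * L ^ 2)) := by gcongr; linarith
    _ ≤ δ * (2 * δ * L) ^ k * (64 * L / ((1 - 4 * δ * L ^ 2) * (1 - 64 * δ * L ^ 2))) := by
        refine mul_le_mul_of_nonneg_left ?_ hA
        rw [div_le_div_iff₀ h1 (by positivity)]
        nlinarith [mul_le_mul_of_nonneg_left (by linarith : 1 - 64 * δ * L ^ 2 ≤ 1) h1.le,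
          mul_le_mul_of_nonneg_right (by linarith : 2 ≤ 64 * L) h1.le]
    _ = 32 * (2 * δ * L) ^ (k + 1) / ((1 - 4 * δ * L ^ 2) * (1 - 64 * δ * L ^ 2)) := by ring

theorem prob_cluster_start_le_general (δ : ℝ) (L : ℕ) (hδ : 0 < δ) (hL3 : 3 ≤ L)
    (hLδ : 64 * δ * (L : ℝ) ^ 2 < 1)
    {Ω : Type} [MeasurableSpace Ω] (μ : Measure Ω)
    (ξ : ℕ → Ω → Bool)
    (hindep : iIndepFun ξ μ)
    (hlaw : ∀ i, μ {ω | ξ i ω = true} = ENNReal.ofReal δ)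
    (z k : ℕ) (hk : 1 ≤ k) :
    μ {ω | ∃ H : ClusterHierarchy L {x | ξ x ω = true}, ∃ c : Finset ℕ,
        H.IsCluster c ∧ 1 ≤ H.level c ∧ clAlpha c = z ∧ H.mass c = k} ≤
      ENNReal.ofReal (32 * (2 * δ * L) ^ k /
        ((1 - 4 * δ * (L : ℝ) ^ 2) * (1 - 64 * δ * (L : ℝ) ^ 2))) := by
  have hL : 0 < L := by omega
  set r := ENNReal.ofReal (2 * δ * L)
  set c := ENNReal.ofReal (2 * L)⁻¹
  have hcr : c * r = ENNReal.ofReal δ := by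
    rw [← ENNReal.ofReal_mul (by positivity)]
    congr 1
    field_simp
  calc μ {ω | ∃ H : ClusterHierarchy L {x | ξ x ω = true}, ∃ c : Finset ℕ,
        H.IsCluster c ∧ 1 ≤ H.level c ∧ clAlpha c = z ∧ H.mass c = k}
      ≤ ∑' l, μ {ω | ∃ b, IsSkeleton L {x | ξ x ω = true} z b k l} := by
        refine (measure_mono ?_).trans (measure_iUnion_le _)
        rintro ω ⟨H, c, ⟨m, hc⟩, -, rfl, rfl⟩
        obtain ⟨-, l, hl⟩ := H.exists_isSkeleton m c hc
        exact Set.mem_iUnion.2 ⟨l, _, hl⟩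
    _ ≤ ∑' l, c * r * r ^ (k - 1) * (l.map (gapWeight L c r)).prod :=
        ENNReal.tsum_le_tsum fun l =>
          measure_isSkeleton_le hindep (fun i => (hlaw i).trans hcr.symm) hk z l
    _ = ENNReal.ofReal δ * r ^ (k - 1) * (1 - ∑' p, gapWeight L c r p)⁻¹ := by
        rw [ENNReal.tsum_mul_left, ENNReal.tsum_list_prod_map, hcr]
    _ ≤ ENNReal.ofReal δ * r ^ (k - 1) *
          ENNReal.ofReal (1 - 1 / 2 * (1 - 2 * δ * L ^ 2)⁻¹)⁻¹ := by
        gcongr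
        exact inv_one_sub_tsum_gapWeight_le hδ.le hL (by nlinarith)
    _ = ENNReal.ofReal (δ * (2 * δ * L) ^ (k - 1) * (1 - 1 / 2 * (1 - 2 * δ * L ^ 2)⁻¹)⁻¹) := by
        rw [ENNReal.ofReal_mul (by positivity), ENNReal.ofReal_mul hδ.le,
          ENNReal.ofReal_pow (by positivity)]
    _ ≤ _ := ENNReal.ofReal_le_ofReal (skeleton_series_le hδ (by exact_mod_cast hL) hLδ hk)

/-- Let `δ > 0` and `L ≥ 3` with `64δL² < 1`. For every `z ∈ ℤ₊` and every
`k ≥ 1`, the probability that there exists a cluster `C` of level at least 1 with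
`α(C) = z` and `m(C) = k` is at most `32(2δL)^k / ((1 − 4δL²)(1 − 64δL²))`. -/
theorem prob_cluster_start_le (δ : ℝ) (L : ℕ) (hδ : 0 < δ) (hL3 : 3 ≤ L)
    (hLδ : 64 * δ * (L : ℝ) ^ 2 < 1)
    {Ω : Type} [MeasurableSpace Ω] (μ : Measure Ω) [IsProbabilityMeasure μ]
    (ξ : ℕ → Ω → Bool) (hmeas : ∀ i, Measurable (ξ i))
    (hindep : iIndepFun ξ μ)
    (hlaw : ∀ i, μ {ω | ξ i ω = true} = ENNReal.ofReal δ)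
    (z k : ℕ) (hk : 1 ≤ k) :
    μ {ω | ∃ H : ClusterHierarchy L {x | ξ x ω = true}, ∃ c : Finset ℕ,
        H.IsCluster c ∧ 1 ≤ H.level c ∧ clAlpha c = z ∧ H.mass c = k} ≤
      ENNReal.ofReal (32 * (2 * δ * L) ^ k /
        ((1 - 4 * δ * (L : ℝ) ^ 2) * (1 - 64 * δ * (L : ℝ) ^ 2))) :=
  prob_cluster_start_le_general δ L hδ hL3 hLδ μ ξ hindep hlaw z k hk
end

section
/- Every cluster C arising in the construction satisfies m(C) ≥ ℓ(C) + 1. Moreover, if a cluster C of level k+1 is formed from a maximal (k+1)-run with n ≥ 2 constituents, then m(C) ≥ max_j m(C_j) + n − 1, where the maximum is over the constituents C_j of the run; in particular the mass of C strictly exceeds the mass of each of its constituents. -/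
open scoped Classical

/-- Every cluster satisfies `m(C) ≥ ℓ(C) + 1`; and the cluster formed from a
maximal `(k+1)`-run with `n ≥ 2` constituents has mass at least `max_j m(C_j) + n − 1`; in
particular its mass strictly exceeds the mass of each of its constituents. -/
theorem mass_ge_level_succ_and_run_mass (L : ℕ) (hL : 3 ≤ L) (Γ : Set ℕ)
    (H : ClusterHierarchy L Γ) :
    (∀ c, H.IsCluster c → H.level c + 1 ≤ H.mass c) ∧
    (∀ k (R : MaxRun L k {b | b ∈ H.C k ∧ k + 1 ≤ H.mass b}),
      (∀ i, i < R.n → H.mass (R.c i) + R.n - 1 ≤ H.mass (R.cluster Γ)) ∧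
      (∀ i, i < R.n → H.mass (R.c i) < H.mass (R.cluster Γ))) := by
  have runBound : ∀ k (R : MaxRun L k {b | b ∈ H.C k ∧ k + 1 ≤ H.mass b}),
      ∀ i, i < R.n → H.mass (R.c i) + R.n - 1 ≤ H.mass (R.cluster Γ) := by
    intro k R j hj
    rw [H.mass_succ k R]
    unfold MaxRun.newMass
    have hn := R.two_le
    have h0 : k + 1 ≤ H.mass (R.c 0) := (R.mem 0 (by omega)).2
    have hcard : (Finset.Ico 1 R.n).card = R.n - 1 := by
      rw [Nat.card_Ico]
    rcases Nat.eq_zero_or_pos j with rfl | hjpos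
    · have hsum : (Finset.Ico 1 R.n).card • 1 ≤
          ∑ i ∈ Finset.Ico 1 R.n, (H.mass (R.c i) - k) := by
        apply Finset.card_nsmul_le_sum
        intro i hi
        have := (R.mem i (Finset.mem_Ico.1 hi).2).2
        omega
      simp only [smul_eq_mul, mul_one, hcard] at hsum
      omega
    · have hjmem : j ∈ Finset.Ico 1 R.n := Finset.mem_Ico.2 ⟨hjpos, hj⟩
      have hj1 : k + 1 ≤ H.mass (R.c j) := (R.mem j hj).2
      have hsum1 : ((Finset.Ico 1 R.n).erase j).card • 1 ≤
          ∑ i ∈ (Finset.Ico 1 R.n).erase j, (H.mass (R.c i) - k) := by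
        apply Finset.card_nsmul_le_sum
        intro i hi
        have := (R.mem i (Finset.mem_Ico.1 (Finset.mem_erase.1 hi).2).2).2
        omega
      have herase : ((Finset.Ico 1 R.n).erase j).card = R.n - 2 := by
        rw [Finset.card_erase_of_mem hjmem, hcard]; omega
      have hsplit : ∑ i ∈ (Finset.Ico 1 R.n).erase j, (H.mass (R.c i) - k)
          + (H.mass (R.c j) - k) = ∑ i ∈ Finset.Ico 1 R.n, (H.mass (R.c i) - k) :=
        Finset.sum_erase_add _ _ hjmem
      simp only [smul_eq_mul, mul_one, herase] at hsum1
      omega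
  constructor
  · have key : ∀ k, ∀ c ∈ H.C k, H.level c + 1 ≤ H.mass c := by
      intro k
      induction k with
      | zero =>
        intro c hc
        have hc' := hc
        rw [H.C_zero] at hc'
        obtain ⟨x, hx, rfl⟩ := hc'
        have hl : H.level ({x} : Finset ℕ) ≤ 0 :=
          Nat.sInf_le (show 0 ∈ {k | ({x} : Finset ℕ) ∈ H.C k} from hc)
        rw [H.mass_zero x hx]
        omega
      | succ k ih =>
        intro c hc
        rcases (H.mem_succ k c).1 hc with ⟨R, rfl⟩ | ⟨hck, _⟩
        · have hl : H.level (R.cluster Γ) ≤ k + 1 :=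
            Nat.sInf_le (show k + 1 ∈ {m | R.cluster Γ ∈ H.C m} from hc)
          have hn := R.two_le
          have h0 : k + 1 ≤ H.mass (R.c 0) := (R.mem 0 (by omega)).2
          have := runBound k R 0 (by omega)
          omega
        · exact ih c hck
    rintro c ⟨k, hk⟩
    exact key k c hk
  · intro k R
    refine ⟨runBound k R, fun i hi => ?_⟩
    have := runBound k R i hi
    have hn := R.two_le
    omega
end

section
/- Fix an integer J ≥ 1. For p ∈ (0,1], let F_p denote the distribution of a Binomial(J,p) random variable conditioned to be at least 1. If 0 < p̃ ≤ p ≤ 1, then F_p stochastically dominates F_{p̃}: for every integer t, F_p({t, t+1, …, J}) ≥ F_{p̃}({t, t+1, …, J}). -/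
noncomputable section

/-- The tail probability `F_p({t, t+1, …, J})` of a Binomial(`J`, `p`) random variable
conditioned to be at least 1: since the conditioned law is supported on `{1, …, J}`, this
is `(∑_{k = max(t,1)}^{J} C(J,k) p^k (1−p)^{J−k}) / (1 − (1−p)^J)`. -/
def condBinomialTail (J : ℕ) (p : ℝ) (t : ℕ) : ℝ :=
  (∑ k ∈ Finset.Icc (max t 1) J, (J.choose k : ℝ) * p ^ k * (1 - p) ^ (J - k)) /
    (1 - (1 - p) ^ J)

/-- Key pointwise MLR inequality. -/
lemma mlr_key (J : ℕ) (p q : ℝ) (hq : 0 ≤ q) (hqp : q ≤ p) (hp1 : p ≤ 1)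
    {j k : ℕ} (hjk : j ≤ k) (hkJ : k ≤ J) :
    (J.choose k : ℝ) * q ^ k * (1 - q) ^ (J - k) *
      ((J.choose j : ℝ) * p ^ j * (1 - p) ^ (J - j)) ≤
    (J.choose k : ℝ) * p ^ k * (1 - p) ^ (J - k) *
      ((J.choose j : ℝ) * q ^ j * (1 - q) ^ (J - j)) := by
  obtain ⟨d, rfl⟩ := Nat.exists_eq_add_of_le hjk
  have hp0 : 0 ≤ p := le_trans hq hqp
  have hq1 : q ≤ 1 := le_trans hqp hp1
  have hJj : J - j = (J - (j + d)) + d := by omega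
  rw [hJj]
  set m := J - (j + d) with hm
  have h1 : q * (1 - p) ≤ p * (1 - q) := by nlinarith
  have h2 : (q * (1 - p)) ^ d ≤ (p * (1 - q)) ^ d :=
    pow_le_pow_left₀ (mul_nonneg hq (by linarith)) h1 d
  have h3 : 0 ≤ (J.choose (j+d) : ℝ) * (J.choose j : ℝ) *
      (p ^ j * q ^ j * (1 - p) ^ m * (1 - q) ^ m) :=
    mul_nonneg (mul_nonneg (Nat.cast_nonneg _) (Nat.cast_nonneg _))
      (mul_nonneg (mul_nonneg (mul_nonneg (pow_nonneg hp0 j) (pow_nonneg hq j))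
        (pow_nonneg (by linarith) m)) (pow_nonneg (by linarith) m))
  have h4 := mul_le_mul_of_nonneg_left h2 h3
  calc (J.choose (j+d) : ℝ) * q ^ (j+d) * (1 - q) ^ m *
      ((J.choose j : ℝ) * p ^ j * (1 - p) ^ (m + d))
      = (J.choose (j+d) : ℝ) * (J.choose j : ℝ) *
        (p ^ j * q ^ j * (1 - p) ^ m * (1 - q) ^ m) * (q * (1 - p)) ^ d := by
        rw [mul_pow]; ring
    _ ≤ (J.choose (j+d) : ℝ) * (J.choose j : ℝ) *
        (p ^ j * q ^ j * (1 - p) ^ m * (1 - q) ^ m) * (p * (1 - q)) ^ d := h4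
    _ = (J.choose (j+d) : ℝ) * p ^ (j+d) * (1 - p) ^ m *
        ((J.choose j : ℝ) * q ^ j * (1 - q) ^ (m + d)) := by
        rw [mul_pow]; ring

/-- Binomial theorem restated: the mass on `{1,…,J}`. -/
lemma sum_binom_Icc (J : ℕ) (p : ℝ) :
    ∑ j ∈ Finset.Icc 1 J, (J.choose j : ℝ) * p ^ j * (1 - p) ^ (J - j)
      = 1 - (1 - p) ^ J := by
  have hbin : ∑ k ∈ Finset.range (J + 1),
      (J.choose k : ℝ) * p ^ k * (1 - p) ^ (J - k) = 1 := by
    have := add_pow p (1 - p) J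
    simp only [add_sub_cancel, one_pow] at this
    conv_rhs => rw [this]
    apply Finset.sum_congr rfl
    intro k hk
    ring
  have hsplit := Finset.sum_Ico_consecutive
    (fun k => (J.choose k : ℝ) * p ^ k * (1 - p) ^ (J - k))
    (show (0:ℕ) ≤ 1 by norm_num) (show 1 ≤ J + 1 by omega)
  rw [Finset.range_eq_Ico] at hbin
  have h0 : ∑ k ∈ Finset.Ico 0 1,
      (J.choose k : ℝ) * p ^ k * (1 - p) ^ (J - k) = (1 - p) ^ J := by
    simp
  have hIcc : Finset.Icc 1 J = Finset.Ico 1 (J + 1) := by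
    rw [Finset.Ico_add_one_right_eq_Icc]
  rw [hIcc]
  rw [← hsplit, h0] at hbin
  linarith

/-- Fix `J ≥ 1`.  For `0 < p̃ ≤ p ≤ 1`, the Binomial(`J`, `p`) law
conditioned to be at least 1 stochastically dominates the Binomial(`J`, `p̃`) law
conditioned to be at least 1: every upper tail `{t, …, J}` has larger probability under
`F_p` than under `F_p̃`. -/
theorem condBinomial_stochastic_dominance (J : ℕ) (hJ : 1 ≤ J)
    (p ptilde : ℝ) (hpt : 0 < ptilde) (hle : ptilde ≤ p) (hp1 : p ≤ 1) (t : ℕ) :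
    condBinomialTail J ptilde t ≤ condBinomialTail J p t := by
  have hp0 : 0 < p := lt_of_lt_of_le hpt hle
  have hpt1 : ptilde ≤ 1 := le_trans hle hp1
  set s := max t 1 with hs
  have hs1 : 1 ≤ s := le_max_right t 1
  have hDp : 0 < 1 - (1 - p) ^ J := by
    have : (1 - p) ^ J < 1 := pow_lt_one₀ (by linarith) (by linarith) (by omega)
    linarith
  have hDq : 0 < 1 - (1 - ptilde) ^ J := by
    have : (1 - ptilde) ^ J < 1 := pow_lt_one₀ (by linarith) (by linarith) (by omega)
    linarith
  rcases le_or_gt s J with hsJ | hsJ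
  · unfold condBinomialTail
    rw [div_le_div_iff₀ hDq hDp]
    -- split the mass on {1,…,J} at s
    have hsplit : ∀ q : ℝ,
        1 - (1 - q) ^ J
          = (∑ j ∈ Finset.Ico 1 s, (J.choose j : ℝ) * q ^ j * (1 - q) ^ (J - j))
            + ∑ k ∈ Finset.Icc s J, (J.choose k : ℝ) * q ^ k * (1 - q) ^ (J - k) := by
      intro q
      rw [← sum_binom_Icc J q]
      have hIcc : Finset.Icc 1 J = Finset.Ico 1 (J + 1) := by rw [Finset.Ico_add_one_right_eq_Icc]
      have hIcc2 : Finset.Icc s J = Finset.Ico s (J + 1) := by rw [Finset.Ico_add_one_right_eq_Icc]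
      rw [hIcc, hIcc2,
        ← Finset.sum_Ico_consecutive _ (show 1 ≤ s from hs1) (show s ≤ J + 1 by omega)]
    rw [hsplit p, hsplit ptilde]
    have key : (∑ k ∈ Finset.Icc s J, (J.choose k : ℝ) * ptilde ^ k * (1 - ptilde) ^ (J - k))
        * (∑ j ∈ Finset.Ico 1 s, (J.choose j : ℝ) * p ^ j * (1 - p) ^ (J - j))
        ≤ (∑ k ∈ Finset.Icc s J, (J.choose k : ℝ) * p ^ k * (1 - p) ^ (J - k))
        * (∑ j ∈ Finset.Ico 1 s, (J.choose j : ℝ) * ptilde ^ j * (1 - ptilde) ^ (J - j)) := by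
      rw [Finset.sum_mul_sum, Finset.sum_mul_sum]
      apply Finset.sum_le_sum
      intro k hk
      apply Finset.sum_le_sum
      intro j hj
      rw [Finset.mem_Icc] at hk
      rw [Finset.mem_Ico] at hj
      exact mlr_key J p ptilde (le_of_lt hpt) hle hp1 (by omega) hk.2
    nlinarith [key]
  · have hempty : Finset.Icc s J = ∅ := Finset.Icc_eq_empty (by omega)
    unfold condBinomialTail
    rw [← hs, hempty]
    simp

end
end

section
/- Let t ≥ 1 be an integer and let p, p̃ ∈ (0,1). If X₁, …, X_t are i.i.d. Bernoulli random variables with success probability p·p̃, then P(X₁ = X₂ = ⋯ = X_t = 0) ≤ (1 − p̃)^{tp/2} + exp(−t·I_p(p/2)), where I_p(x) = x log(x/p) + (1−x) log((1−x)/(1−p)) for x ∈ (0,1) is the Cramér transform of the Bernoulli(p) distribution. -/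
/-!
Read each trial as the product of independent Bernoulli(`p`) and Bernoulli(`p̃`) trials: then
`P(X₁ = ⋯ = X_t = 0) = (1 - p p̃)^t = E[(1 - p̃)^K]` with `K ~ Binomial(t, p)`. On `K ≥ tp/2`
the integrand is at most `(1 - p̃)^{tp/2}`; on `K < tp/2` it is at most `r^{K - tp/2}` for any
`r ≤ 1`, and the binomial generating function gives `E[r^{K - tp/2}] = exp(-t I_p(p/2))` for
the optimal Chernoff parameter `r = (1 - p)/(2 - p)`.
-/

open MeasureTheory ProbabilityTheory

noncomputable section

/-- The Cramér transform `I_p(x) = x log(x/p) + (1−x) log((1−x)/(1−p))` of the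
Bernoulli(`p`) distribution. -/
def cramerBernoulli (p x : ℝ) : ℝ :=
  x * Real.log (x / p) + (1 - x) * Real.log ((1 - x) / (1 - p))

open Finset Real

theorem sum_binomial_mul_pow (t : ℕ) (p x : ℝ) :
    ∑ k ∈ range (t + 1), t.choose k * p ^ k * (1 - p) ^ (t - k) * x ^ k =
      (p * x + (1 - p)) ^ t := by
  rw [add_pow]
  exact sum_congr rfl fun k _ => by ring

theorem pow_le_rpow_add_rpow_sub {a r : ℝ} (ha₀ : 0 < a) (ha₁ : a ≤ 1) (hr₀ : 0 < r)
    (hr₁ : r ≤ 1) (k : ℕ) (m : ℝ) :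
    a ^ k ≤ a ^ m + r ^ ((k : ℝ) - m) := by
  rcases le_or_gt m k with hmk | hkm
  · have hak : a ^ k ≤ a ^ m := by
      rw [← rpow_natCast]
      exact rpow_le_rpow_of_exponent_ge ha₀ ha₁ hmk
    linarith [rpow_pos_of_pos hr₀ ((k : ℝ) - m)]
  · have hr : 1 ≤ r ^ ((k : ℝ) - m) :=
      one_le_rpow_of_pos_of_le_one_of_nonpos hr₀ hr₁ (by linarith)
    linarith [pow_le_one₀ ha₀.le ha₁ (n := k), rpow_pos_of_pos ha₀ m]

theorem exp_neg_cramerBernoulli_half {p : ℝ} (hp₀ : 0 < p) (hp₁ : p < 1) :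
    exp (-cramerBernoulli p (p / 2)) = 2 * ((1 - p) / (2 - p)) ^ (1 - p / 2) := by
  have h₁ : 0 < 1 - p := by linarith
  have h₂ : 0 < 1 - p / 2 := by linarith
  have hr₀ : 0 < (1 - p) / (2 - p) := div_pos h₁ (by linarith)
  rw [← exp_log (mul_pos two_pos (rpow_pos_of_pos hr₀ _)),
    log_mul two_ne_zero (rpow_pos_of_pos hr₀ _).ne', log_rpow hr₀,
    show 2 - p = 2 * (1 - p / 2) by ring, cramerBernoulli,
    show p / 2 / p = 2⁻¹ by field_simp, log_inv, log_div h₁.ne' (by positivity),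
    log_mul two_ne_zero h₂.ne', log_div h₂.ne' h₁.ne']
  ring_nf

theorem sum_binomial_mul_rpow_sub_eq_exp {p : ℝ} (hp₀ : 0 < p) (hp₁ : p < 1) (t : ℕ) :
    ∑ k ∈ range (t + 1), t.choose k * p ^ k * (1 - p) ^ (t - k) *
        ((1 - p) / (2 - p)) ^ ((k : ℝ) - t * p / 2) =
      exp (-t * cramerBernoulli p (p / 2)) := by
  set r := (1 - p) / (2 - p) with hr
  have h₂ : 0 < 2 - p := by linarith
  have hr₀ : 0 < r := div_pos (by linarith) h₂
  have hpr : p * r + (1 - p) = 2 * r := by rw [hr]; field_simp; ring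
  calc _ = (∑ k ∈ range (t + 1), t.choose k * p ^ k * (1 - p) ^ (t - k) * r ^ k) *
        r ^ (-(t * p / 2)) := by
        rw [sum_mul]
        refine sum_congr rfl fun k _ => ?_
        rw [show (k : ℝ) - t * p / 2 = k + -(t * p / 2) by ring, rpow_add hr₀, rpow_natCast]
        ring
    _ = (2 * r ^ (1 - p / 2)) ^ t := by
        rw [sum_binomial_mul_pow, hpr, mul_pow, mul_pow, mul_assoc, ← rpow_natCast,
          ← rpow_natCast, ← rpow_add hr₀, ← rpow_natCast (r ^ (1 - p / 2)), ← rpow_mul hr₀.le]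
        ring_nf
    _ = _ := by
        rw [← exp_neg_cramerBernoulli_half hp₀ hp₁, ← exp_nat_mul, neg_mul, mul_neg]

theorem one_sub_mul_pow_le {p s : ℝ} (hp₀ : 0 < p) (hp₁ : p < 1) (hs₀ : 0 ≤ s) (hs₁ : s < 1)
    (t : ℕ) :
    (1 - p * s) ^ t ≤ (1 - s) ^ (t * p / 2 : ℝ) + exp (-t * cramerBernoulli p (p / 2)) := by
  have hr₀ : 0 < (1 - p) / (2 - p) := div_pos (by linarith) (by linarith)
  have hr₁ : (1 - p) / (2 - p) ≤ 1 := (div_le_one (by linarith)).2 (by linarith)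
  calc (1 - p * s) ^ t
      = ∑ k ∈ range (t + 1), t.choose k * p ^ k * (1 - p) ^ (t - k) * (1 - s) ^ k := by
        rw [sum_binomial_mul_pow]; ring_nf
    _ ≤ ∑ k ∈ range (t + 1), t.choose k * p ^ k * (1 - p) ^ (t - k) *
          ((1 - s) ^ (t * p / 2 : ℝ) + ((1 - p) / (2 - p)) ^ ((k : ℝ) - t * p / 2)) := by
        gcongr with k
        exact pow_le_rpow_add_rpow_sub (by linarith) (by linarith) hr₀ hr₁ k _
    _ = (1 - s) ^ (t * p / 2 : ℝ) + exp (-t * cramerBernoulli p (p / 2)) := by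
        simp only [mul_add, sum_add_distrib, ← sum_mul]
        have hmass := sum_binomial_mul_pow t p 1
        simp only [one_pow, mul_one, add_sub_cancel] at hmass
        rw [sum_binomial_mul_rpow_sub_eq_exp hp₀ hp₁, hmass, one_mul]

theorem ProbabilityTheory.iIndepFun.measure_forall_eq_false {Ω ι : Type*} [MeasurableSpace Ω] {μ : Measure Ω}
    [IsProbabilityMeasure μ] [Fintype ι] {X : ι → Ω → Bool} (hmeas : ∀ i, Measurable (X i))
    (hindep : iIndepFun X μ) :
    μ {ω | ∀ i, X i ω = false} = ∏ i, (1 - μ {ω | X i ω = true}) := by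
  rw [show {ω | ∀ i, X i ω = false} = ⋂ i, X i ⁻¹' {false} by ext; simp,
    hindep.meas_iInter fun i => ⟨{false}, trivial, rfl⟩]
  refine prod_congr rfl fun i _ => ?_
  rw [show X i ⁻¹' {false} = (X i ⁻¹' {true})ᶜ by ext; simp,
    prob_compl_eq_one_sub (hmeas i (measurableSet_singleton true))]
  rfl

theorem bernoulli_all_zero_bound_general (t : ℕ) (p ptilde : ℝ)
    (hp0 : 0 < p) (hp1 : p < 1) (hpt0 : 0 < ptilde) (hpt1 : ptilde < 1)
    {Ω : Type} [MeasurableSpace Ω] (μ : Measure Ω) [IsProbabilityMeasure μ]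
    (X : Fin t → Ω → Bool) (hmeas : ∀ i, Measurable (X i))
    (hindep : iIndepFun X μ)
    (hlaw : ∀ i, μ {ω | X i ω = true} = ENNReal.ofReal (p * ptilde)) :
    μ {ω | ∀ i, X i ω = false} ≤
      ENNReal.ofReal ((1 - ptilde) ^ ((t : ℝ) * p / 2) +
        Real.exp (-(t : ℝ) * cramerBernoulli p (p / 2))) := by
  calc μ {ω | ∀ i, X i ω = false}
      = ENNReal.ofReal ((1 - p * ptilde) ^ t) := by
        rw [hindep.measure_forall_eq_false hmeas, ENNReal.ofReal_pow (by nlinarith),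
          ENNReal.ofReal_sub _ (by positivity), ENNReal.ofReal_one]
        simp [hlaw]
    _ ≤ _ := ENNReal.ofReal_le_ofReal (one_sub_mul_pow_le hp0 hp1 hpt0.le hpt1 t)

/-- Let `t ≥ 1` and `p, p̃ ∈ (0,1)`.  If `X₁, …, X_t` are i.i.d.
Bernoulli with success probability `p·p̃`, then
`P(X₁ = ⋯ = X_t = 0) ≤ (1 − p̃)^{tp/2} + exp(−t·I_p(p/2))`. -/
theorem bernoulli_all_zero_bound (t : ℕ) (ht : 1 ≤ t) (p ptilde : ℝ)
    (hp0 : 0 < p) (hp1 : p < 1) (hpt0 : 0 < ptilde) (hpt1 : ptilde < 1)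
    {Ω : Type} [MeasurableSpace Ω] (μ : Measure Ω) [IsProbabilityMeasure μ]
    (X : Fin t → Ω → Bool) (hmeas : ∀ i, Measurable (X i))
    (hindep : iIndepFun X μ)
    (hlaw : ∀ i, μ {ω | X i ω = true} = ENNReal.ofReal (p * ptilde)) :
    μ {ω | ∀ i, X i ω = false} ≤
      ENNReal.ofReal ((1 - ptilde) ^ ((t : ℝ) * p / 2) +
        Real.exp (-(t : ℝ) * cramerBernoulli p (p / 2))) :=
  bernoulli_all_zero_bound_general t p ptilde hp0 hp1 hpt0 hpt1 μ X hmeas hindep hlaw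

end
end
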